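/- arXiv:1711.02431 — 2 statements merged into one kernel-verified Lean document; each statement's English description precedes it below -/
import Mathlib

section
/- Let ν be an odd positive integer. Then the Sato–Tate measure of the set I' = ⋃_{j=1}^{(ν+1)/2} ( (2j−1)π/(ν+1), 2jπ/(ν+1) ) equals 1/2; that is, (2/π) · Σ_{j=1}^{(ν+1)/2} ∫_{(2j−1)π/(ν+1)}^{2jπ/(ν+1)} sin²θ dθ = 1/2. -/
/-! The reflection `θ ↦ π - θ` preserves `sin²` and exchanges the intervals of `I'` with the
complementary intervals `((2j-2)π/(ν+1), (2j-1)π/(ν+1))`. Together the two families tile `[0, π]`,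
over which `∫ sin² = π/2`, so `I'` carries exactly half of it. -/

open Finset Real

noncomputable def sliceIntegral (f : ℝ → ℝ) (h : ℝ) (k : ℕ) : ℝ :=
  ∫ x in k * h..(k + 1) * h, f x

section

variable {f : ℝ → ℝ} {h : ℝ}

theorem intervalIntegral_eq_of_symm {L : ℝ} (hsymm : ∀ x, f (L - x) = f x) (a b : ℝ) :
    ∫ x in a..b, f x = ∫ x in L - b..L - a, f x := by
  simp_rw [← intervalIntegral.integral_comp_sub_left, hsymm]

theorem sliceIntegral_eq_of_add_eq {n k k' : ℕ} (hsymm : ∀ x, f (n * h - x) = f x)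
    (hk : k + k' + 1 = n) : sliceIntegral f h k = sliceIntegral f h k' := by
  have hn : (n : ℝ) = k + k' + 1 := by exact_mod_cast hk.symm
  rw [sliceIntegral, intervalIntegral_eq_of_symm hsymm, sliceIntegral, hn]
  congr 1 <;> ring

theorem sum_sliceIntegral_range (hf : Continuous f) (n : ℕ) :
    ∑ k ∈ range n, sliceIntegral f h k = ∫ x in 0..n * h, f x := by
  simpa [sliceIntegral] using intervalIntegral.sum_integral_adjacent_intervals
    (μ := MeasureTheory.volume) (a := fun k : ℕ => (k : ℝ) * h) (n := n)
    (fun k _ => hf.intervalIntegrable _ _)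

theorem sum_range_two_mul {M : Type*} [AddCommMonoid M] (g : ℕ → M) (m : ℕ) :
    ∑ k ∈ range (2 * m), g k = ∑ j ∈ range m, (g (2 * j) + g (2 * j + 1)) := by
  induction m with
  | zero => simp
  | succ m ih => rw [Nat.mul_succ, sum_range_succ, sum_range_succ, sum_range_succ, ih, add_assoc]

theorem sum_sliceIntegral_odd_eq_even {m : ℕ} (hsymm : ∀ x, f (2 * m * h - x) = f x) :
    ∑ j ∈ range m, sliceIntegral f h (2 * j + 1) = ∑ j ∈ range m, sliceIntegral f h (2 * j) := by
  rw [← sum_range_reflect]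
  refine sum_congr rfl fun j hj =>
    sliceIntegral_eq_of_add_eq (n := 2 * m) (by exact_mod_cast hsymm) ?_
  have := mem_range.1 hj
  omega

theorem sum_sliceIntegral_odd_eq_half (hf : Continuous f) {m : ℕ}
    (hsymm : ∀ x, f (2 * m * h - x) = f x) :
    ∑ j ∈ range m, sliceIntegral f h (2 * j + 1) = (∫ x in 0..2 * m * h, f x) / 2 := by
  have htotal := sum_sliceIntegral_range (h := h) hf (2 * m)
  rw [sum_range_two_mul, sum_add_distrib] at htotal
  push_cast at htotal
  rw [← htotal, sum_sliceIntegral_odd_eq_even hsymm]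
  ring

end

theorem sato_tate_measure_I'_general (ν : ℕ) (hν : Odd ν) :
    (2 / Real.pi) * ∑ j ∈ Finset.Icc 1 ((ν + 1) / 2),
      ∫ θ in ((2 * (j : ℝ) - 1) * Real.pi / ((ν : ℝ) + 1))..
             (2 * (j : ℝ) * Real.pi / ((ν : ℝ) + 1)),
        Real.sin θ ^ 2 = 1 / 2 := by
  obtain ⟨k, rfl⟩ := hν
  have hm : (2 * k + 1 + 1) / 2 = k + 1 := by omega
  have hh : (2 * ((k + 1 : ℕ) : ℝ)) * (π / (2 * (k + 1 : ℕ))) = π := by field_simp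
  have hsymm : ∀ x, sin (2 * ((k + 1 : ℕ) : ℝ) * (π / (2 * (k + 1 : ℕ))) - x) ^ 2 = sin x ^ 2 :=
    fun x => by rw [hh, sin_pi_sub]
  have hslices : ∑ j ∈ Icc 1 (k + 1), ∫ θ in (2 * (j : ℝ) - 1) * π / ((2 * k + 1 : ℕ) + 1)..
        2 * (j : ℝ) * π / ((2 * k + 1 : ℕ) + 1), sin θ ^ 2
      = ∑ j ∈ range (k + 1),
          sliceIntegral (fun x => sin x ^ 2) (π / (2 * (k + 1 : ℕ))) (2 * j + 1) := by
    rw [← Ico_add_one_right_eq_Icc, sum_Ico_eq_sum_range, Nat.add_sub_cancel]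
    refine sum_congr rfl fun j _ => ?_
    rw [sliceIntegral]
    congr 1 <;> push_cast <;> ring
  rw [hm, hslices, sum_sliceIntegral_odd_eq_half (by fun_prop) hsymm, hh, integral_sin_sq]
  simp only [sin_zero, sin_pi, cos_zero, cos_pi]
  field_simp
  ring

/-- For odd `ν ≥ 1`, the Sato–Tate measure of
`I' = ⋃_{j=1}^{(ν+1)/2} ((2j-1)π/(ν+1), 2jπ/(ν+1))` equals `1/2`. -/
theorem sato_tate_measure_I' (ν : ℕ) (hν : Odd ν) (hpos : 0 < ν) :
    (2 / Real.pi) * ∑ j ∈ Finset.Icc 1 ((ν + 1) / 2),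
      ∫ θ in ((2 * (j : ℝ) - 1) * Real.pi / ((ν : ℝ) + 1))..
             (2 * (j : ℝ) * Real.pi / ((ν : ℝ) + 1)),
        Real.sin θ ^ 2 = 1 / 2 :=
  sato_tate_measure_I'_general ν hν
end

section
/- Let ν be an odd positive integer. For ε ∈ (0, 1) let m(ε) = (2/π) · Σ_{j=1}^{(ν+1)/2} ∫_{((2j−2)π + arcsin ε)/(ν+1)}^{((2j−1)π − arcsin ε)/(ν+1)} sin²θ dθ be the Sato–Tate measure of the set I_ε = ⋃_{j=1}^{(ν+1)/2} ( ((2j−2)π + arcsin ε)/(ν+1), ((2j−1)π − arcsin ε)/(ν+1) ). Then m(ε) tends to 1/2 as ε tends to 0 from the right. -/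
/-!
At `ε = 0` the set `I_0` and its mirror image `π - I_0` tile `[0, π]` up to endpoints, since the
mirror image of an even subinterval of the uniform partition of `[0, π]` into `ν + 1` pieces is
an odd one. As `sin²` is invariant under `θ ↦ π - θ`, `I_0` carries exactly half of the total
Sato–Tate mass. The measure of `I_ε` is a continuous function of `arcsin ε`, hence of `ε`.
-/

open Filter

open Real Finset MeasureTheory

theorem Continuous.intervalIntegral_of_bounds {X : Type*} [TopologicalSpace X] {f : ℝ → ℝ}
    (hf : Continuous f) {a b : X → ℝ} (ha : Continuous a) (hb : Continuous b) :
    Continuous fun x => ∫ t in a x..b x, f t := by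
  have hprim := intervalIntegral.continuous_primitive (μ := volume)
    (fun _ _ => hf.intervalIntegrable _ _) 0
  have hdiff : ∀ x, ∫ t in a x..b x, f t = (∫ t in 0..b x, f t) - ∫ t in 0..a x, f t :=
    fun x => (intervalIntegral.integral_interval_sub_left (hf.intervalIntegrable _ _)
      (hf.intervalIntegrable _ _)).symm
  simp only [hdiff]
  exact (hprim.comp hb).sub (hprim.comp ha)

theorem two_mul_sum_integral_even_subintervals {f : ℝ → ℝ} (hf : Continuous f) {L : ℝ}
    (hsymm : ∀ x, f (L - x) = f x) {m : ℕ} (hm : m ≠ 0) :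
    2 * ∑ j ∈ range m, ∫ x in (2 * j * L / (2 * m))..((2 * j + 1) * L / (2 * m)), f x =
      ∫ x in 0..L, f x := by
  set p : ℝ → ℝ := fun k => k * L / (2 * m) with hp
  have hm' : (m : ℝ) ≠ 0 := Nat.cast_ne_zero.mpr hm
  have reflect : ∀ j ∈ range m, ∫ x in p (2 * j + 1)..p (2 * j + 2), f x =
      ∫ x in p (2 * ↑(m - 1 - j))..p (2 * ↑(m - 1 - j) + 1), f x := by
    intro j hj
    have hcast : ((m - 1 - j : ℕ) : ℝ) = m - 1 - j := by
      have := mem_range.mp hj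
      rw [Nat.cast_sub (by omega), Nat.cast_sub (by omega)]
      simp
    calc ∫ x in p (2 * j + 1)..p (2 * j + 2), f x
        = ∫ x in p (2 * j + 1)..p (2 * j + 2), f (L - x) := by simp only [hsymm]
      _ = ∫ x in L - p (2 * j + 2)..L - p (2 * j + 1), f x :=
          intervalIntegral.integral_comp_sub_left _ _
      _ = _ := by rw [hcast]; congr 1 <;> simp only [hp] <;> field_simp <;> ring
  have whole : ∑ j ∈ range m, ∫ x in p (2 * j)..p (2 * j + 2), f x = ∫ x in 0..L, f x := by
    have := intervalIntegral.sum_integral_adjacent_intervals (μ := volume) (f := f)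
      (a := fun j : ℕ => p (2 * j)) (n := m) (fun _ _ => hf.intervalIntegrable _ _)
    convert this using 2 <;> simp only [hp] <;> push_cast <;> field_simp; ring
  have split : ∀ j ∈ range m, ∫ x in p (2 * j)..p (2 * j + 2), f x =
      (∫ x in p (2 * j)..p (2 * j + 1), f x) + ∫ x in p (2 * j + 1)..p (2 * j + 2), f x :=
    fun j _ => (intervalIntegral.integral_add_adjacent_intervals
      (hf.intervalIntegrable _ _) (hf.intervalIntegrable _ _)).symm
  rw [← whole, sum_congr rfl split, sum_add_distrib, sum_congr rfl reflect,
    sum_range_reflect (fun j : ℕ => ∫ x in p (2 * j)..p (2 * j + 1), f x), two_mul]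

theorem sum_integral_sin_sq_even_subintervals {m : ℕ} (hm : m ≠ 0) :
    ∑ j ∈ Icc 1 m, ∫ θ in ((2 * (j : ℝ) - 2) * π / (2 * m))..((2 * (j : ℝ) - 1) * π / (2 * m)),
      sin θ ^ 2 = π / 4 := by
  have hhalf := two_mul_sum_integral_even_subintervals (f := fun θ => sin θ ^ 2) (L := π)
    (by fun_prop) (fun x => by simp only [sin_pi_sub]) hm
  have htotal : ∫ θ in (0 : ℝ)..π, sin θ ^ 2 = π / 2 := by simp [integral_sin_sq]
  rw [htotal] at hhalf
  rw [← Ico_add_one_right_eq_Icc, sum_Ico_eq_sum_range, Nat.add_sub_cancel]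
  have hlow : ∀ x : ℝ, 2 * (1 + x) - 2 = 2 * x := fun x => by ring
  have hupp : ∀ x : ℝ, 2 * (1 + x) - 1 = 2 * x + 1 := fun x => by ring
  push_cast
  simp only [hlow, hupp]
  linarith

theorem sato_tate_measure_I_eps_tendsto_general (ν : ℕ) (hν : Odd ν) :
    Tendsto
      (fun ε : ℝ =>
        (2 / Real.pi) * ∑ j ∈ Finset.Icc 1 ((ν + 1) / 2),
          ∫ θ in (((2 * (j : ℝ) - 2) * Real.pi + Real.arcsin ε) / ((ν : ℝ) + 1))..
                 (((2 * (j : ℝ) - 1) * Real.pi - Real.arcsin ε) / ((ν : ℝ) + 1)),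
            Real.sin θ ^ 2)
      (nhdsWithin 0 (Set.Ioo (0 : ℝ) 1)) (nhds (1 / 2)) := by
  obtain ⟨k, rfl⟩ := hν
  have hhalf : (2 * k + 1 + 1) / 2 = k + 1 := by omega
  have hden : ((2 * k + 1 : ℕ) : ℝ) + 1 = 2 * ((k + 1 : ℕ) : ℝ) := by push_cast; ring
  rw [hhalf, hden]
  refine (Continuous.tendsto' ?_ 0 _ ?_).mono_left nhdsWithin_le_nhds
  · exact continuous_const.mul <| continuous_finsetSum _ fun j _ =>
      (continuous_sin.pow 2).intervalIntegral_of_bounds (by fun_prop) (by fun_prop)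
  · simp only [arcsin_zero, add_zero, sub_zero,
      sum_integral_sin_sq_even_subintervals k.succ_ne_zero]
    field_simp
    norm_num

/-- For odd `ν ≥ 1`, the Sato–Tate measure of
`I_ε = ⋃_{j=1}^{(ν+1)/2} (((2j-2)π + arcsin ε)/(ν+1), ((2j-1)π - arcsin ε)/(ν+1))`
tends to `1/2` as `ε → 0⁺`. -/
theorem sato_tate_measure_I_eps_tendsto (ν : ℕ) (hν : Odd ν) (hpos : 0 < ν) :
    Tendsto
      (fun ε : ℝ =>
        (2 / Real.pi) * ∑ j ∈ Finset.Icc 1 ((ν + 1) / 2),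
          ∫ θ in (((2 * (j : ℝ) - 2) * Real.pi + Real.arcsin ε) / ((ν : ℝ) + 1))..
                 (((2 * (j : ℝ) - 1) * Real.pi - Real.arcsin ε) / ((ν : ℝ) + 1)),
            Real.sin θ ^ 2)
      (nhdsWithin 0 (Set.Ioo (0 : ℝ) 1)) (nhds (1 / 2)) :=
  sato_tate_measure_I_eps_tendsto_general ν hν
end
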